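/- arXiv:math/0306401 — 2 statements merged into one kernel-verified Lean document; each statement's English description precedes it below -/
import Mathlib

section
/- Let θ₁, θ₂, θ₃ ∈ ℝ be pairwise distinct modulo 2π. Every line in ℝ³ that meets each of the lines L(θ₁), L(θ₂), L(θ₃) is equal to M(φ) for some φ ∈ ℝ. -/
/-!
A line meeting the hyperboloid `S` in three points lies on `S`, since restricted to the line the
equation of `S` is a quadratic polynomial. The three meeting points are distinct because the lines
`L(θ)` for distinct `θ` are disjoint. Every line on `S` is some `L(φ)` or `M(φ)`: it is not
horizontal, it crosses the plane `z = 0` on the unit circle, and its direction is tangent to that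
circle there. Finally it cannot be some `L(φ)`, which would meet both `L(θ₁)` and `L(θ₂)`.
-/

open Set

noncomputable section

/-- The line in ℝ³ through `a` with direction `v`. -/
def lineThrough (a v : ℝ × ℝ × ℝ) : Set (ℝ × ℝ × ℝ) :=
  {p | ∃ r : ℝ, p = a + r • v}

/-- `L` is a line in ℝ³. -/
def IsLine (L : Set (ℝ × ℝ × ℝ)) : Prop :=
  ∃ a v : ℝ × ℝ × ℝ, v ≠ 0 ∧ L = lineThrough a v

/-- `L` is a transversal to the family of sets `s`: it is a line meeting every `s i`. -/
def IsTransversal {n : ℕ} (s : Fin n → Set (ℝ × ℝ × ℝ)) (L : Set (ℝ × ℝ × ℝ)) : Prop :=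
  IsLine L ∧ ∀ i, (L ∩ s i).Nonempty

/-- Two transversals `L₀`, `L₁` to the family `s` lie in the same connected component of
transversals: one can be moved continuously to the other while remaining a transversal. -/
def SameComp {n : ℕ} (s : Fin n → Set (ℝ × ℝ × ℝ)) (L₀ L₁ : Set (ℝ × ℝ × ℝ)) : Prop :=
  ∃ a v : ℝ → ℝ × ℝ × ℝ,
    ContinuousOn a (Icc 0 1) ∧ ContinuousOn v (Icc 0 1) ∧
    (∀ t ∈ Icc (0:ℝ) 1, v t ≠ 0) ∧
    (∀ t ∈ Icc (0:ℝ) 1, ∀ i, (lineThrough (a t) (v t) ∩ s i).Nonempty) ∧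
    lineThrough (a 0) (v 0) = L₀ ∧ lineThrough (a 1) (v 1) = L₁

/-- The line `L(θ)` of the first ruling of the hyperboloid `x² + y² − z² = 1`. -/
def Lrul (θ : ℝ) : Set (ℝ × ℝ × ℝ) :=
  {p | ∃ t : ℝ, p = (Real.cos θ - t * Real.sin θ, Real.sin θ + t * Real.cos θ, t)}

/-- The line `M(θ)` of the second ruling of the hyperboloid `x² + y² − z² = 1`. -/
def Mrul (θ : ℝ) : Set (ℝ × ℝ × ℝ) :=
  {p | ∃ t : ℝ, p = (Real.cos θ - t * Real.sin θ, Real.sin θ + t * Real.cos θ, -t)}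

open Real

def minkowskiQuad (p : ℝ × ℝ × ℝ) : ℝ :=
  p.1 ^ 2 + p.2.1 ^ 2 - p.2.2 ^ 2

def minkowskiInner (p q : ℝ × ℝ × ℝ) : ℝ :=
  p.1 * q.1 + p.2.1 * q.2.1 - p.2.2 * q.2.2

def hyperboloid : Set (ℝ × ℝ × ℝ) :=
  {p | minkowskiQuad p = 1}

lemma minkowskiQuad_add_smul (a v : ℝ × ℝ × ℝ) (r : ℝ) :
    minkowskiQuad (a + r • v) =
      minkowskiQuad a + 2 * r * minkowskiInner a v + r ^ 2 * minkowskiQuad v := by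
  simp only [minkowskiQuad, minkowskiInner, Prod.fst_add, Prod.snd_add, Prod.smul_fst,
    Prod.smul_snd, smul_eq_mul]
  ring

lemma lineThrough_subset_hyperboloid_iff {a v : ℝ × ℝ × ℝ} :
    lineThrough a v ⊆ hyperboloid ↔
      minkowskiQuad a = 1 ∧ minkowskiInner a v = 0 ∧ minkowskiQuad v = 0 := by
  constructor
  · intro h
    have hmem (r : ℝ) : minkowskiQuad (a + r • v) = 1 := h ⟨r, rfl⟩
    have h₀ := hmem 0
    have h₁ := hmem 1
    have h₂ := hmem (-1)
    simp only [minkowskiQuad_add_smul] at h₀ h₁ h₂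
    refine ⟨by linear_combination h₀, ?_, ?_⟩
    · linear_combination (h₁ - h₂) / 4
    · linear_combination (h₁ + h₂) / 2 - h₀
  · rintro ⟨ha, hav, hv⟩ _ ⟨r, rfl⟩
    simp only [hyperboloid, Set.mem_ofPred_eq, minkowskiQuad_add_smul, ha, hav, hv]
    ring

lemma eq_zero_of_three_roots {K : Type*} [Field K] {A B C r₁ r₂ r₃ : K}
    (h₁ : A * r₁ ^ 2 + B * r₁ + C = 0) (h₂ : A * r₂ ^ 2 + B * r₂ + C = 0)
    (h₃ : A * r₃ ^ 2 + B * r₃ + C = 0) (h₁₂ : r₁ ≠ r₂) (h₁₃ : r₁ ≠ r₃) (h₂₃ : r₂ ≠ r₃) :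
    A = 0 ∧ B = 0 ∧ C = 0 := by
  have hA : A = 0 := by
    have : A * ((r₁ - r₂) * (r₂ - r₃) * (r₁ - r₃)) = 0 := by
      linear_combination (r₂ - r₃) * h₁ - (r₁ - r₃) * h₂ + (r₁ - r₂) * h₃
    simpa [sub_ne_zero.mpr h₁₂, sub_ne_zero.mpr h₁₃, sub_ne_zero.mpr h₂₃] using this
  have hB : B = 0 := by
    have : B * (r₁ - r₂) = 0 := by linear_combination h₁ - h₂ - (r₁ ^ 2 - r₂ ^ 2) * hA
    simpa [sub_ne_zero.mpr h₁₂] using this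
  exact ⟨hA, hB, by linear_combination h₁ - r₁ ^ 2 * hA - r₁ * hB⟩

lemma lineThrough_subset_hyperboloid_of_three_mem {a v : ℝ × ℝ × ℝ} {r₁ r₂ r₃ : ℝ}
    (h₁ : a + r₁ • v ∈ hyperboloid) (h₂ : a + r₂ • v ∈ hyperboloid)
    (h₃ : a + r₃ • v ∈ hyperboloid) (h₁₂ : r₁ ≠ r₂) (h₁₃ : r₁ ≠ r₃) (h₂₃ : r₂ ≠ r₃) :
    lineThrough a v ⊆ hyperboloid := by
  simp only [hyperboloid, Set.mem_ofPred_eq, minkowskiQuad_add_smul] at h₁ h₂ h₃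
  obtain ⟨hv, hav, ha⟩ := eq_zero_of_three_roots (A := minkowskiQuad v)
    (B := 2 * minkowskiInner a v) (C := minkowskiQuad a - 1)
    (by linear_combination h₁) (by linear_combination h₂) (by linear_combination h₃) h₁₂ h₁₃ h₂₃
  exact lineThrough_subset_hyperboloid_iff.mpr
    ⟨by linarith, by linarith, hv⟩

lemma lineThrough_add_smul_smul (a v : ℝ × ℝ × ℝ) (s : ℝ) {c : ℝ} (hc : c ≠ 0) :
    lineThrough (a + s • v) (c • v) = lineThrough a v := by
  ext p
  constructor
  · rintro ⟨r, rfl⟩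
    exact ⟨s + r * c, by module⟩
  · rintro ⟨r, rfl⟩
    refine ⟨(r - s) / c, ?_⟩
    rw [smul_smul, div_mul_cancel₀ _ hc]
    module

lemma exists_lineThrough_eq_of_snd_snd_ne_zero {a v : ℝ × ℝ × ℝ} (hv : v.2.2 ≠ 0) :
    ∃ x y u w : ℝ, lineThrough a v = lineThrough (x, y, 0) (u, w, 1) := by
  refine ⟨a.1 - a.2.2 / v.2.2 * v.1, a.2.1 - a.2.2 / v.2.2 * v.2.1, v.1 / v.2.2, v.2.1 / v.2.2,
    ?_⟩
  rw [← lineThrough_add_smul_smul a v (-(a.2.2 / v.2.2)) (inv_ne_zero hv)]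
  congr 1 <;> ext <;> simp [field, sub_eq_add_neg]

lemma Lrul_eq_lineThrough (φ : ℝ) :
    Lrul φ = lineThrough (cos φ, sin φ, 0) (-sin φ, cos φ, 1) := by
  ext p
  constructor
  · rintro ⟨t, rfl⟩
    exact ⟨t, by simp; ring_nf⟩
  · rintro ⟨t, rfl⟩
    exact ⟨t, by simp; ring_nf⟩

lemma Mrul_eq_lineThrough (φ : ℝ) :
    Mrul φ = lineThrough (cos φ, sin φ, 0) (sin φ, -cos φ, 1) := by
  ext p
  constructor
  · rintro ⟨t, rfl⟩
    exact ⟨-t, by simp; ring_nf⟩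
  · rintro ⟨t, rfl⟩
    exact ⟨-t, by simp⟩

lemma Lrul_subset_hyperboloid (θ : ℝ) : Lrul θ ⊆ hyperboloid := by
  rintro _ ⟨t, rfl⟩
  simp only [hyperboloid, Set.mem_ofPred_eq, minkowskiQuad]
  linear_combination (1 + t ^ 2) * sin_sq_add_cos_sq θ

lemma coe_eq_of_mem_Lrul_of_mem_Lrul {θ θ' : ℝ} {p : ℝ × ℝ × ℝ} (h : p ∈ Lrul θ)
    (h' : p ∈ Lrul θ') : (θ : AddCircle (2 * π)) = θ' := by
  obtain ⟨t, rfl⟩ := h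
  obtain ⟨_, h'⟩ := h'
  simp only [Prod.mk.injEq] at h'
  obtain ⟨h₁, h₂, rfl⟩ := h'
  have ht : (1 + t ^ 2) ≠ 0 := by positivity
  refine Real.Angle.cos_sin_inj (mul_left_cancel₀ ht ?_) (mul_left_cancel₀ ht ?_)
  · linear_combination h₁ + t * h₂
  · linear_combination h₂ - t * h₁

lemma exists_cos_eq_and_sin_eq {x y : ℝ} (h : x ^ 2 + y ^ 2 = 1) :
    ∃ φ, cos φ = x ∧ sin φ = y := by
  have hz : ‖(⟨x, y⟩ : ℂ)‖ = 1 := by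
    rw [Complex.norm_def, Complex.normSq_mk, sqrt_eq_one]
    linear_combination h
  have hz₀ : (⟨x, y⟩ : ℂ) ≠ 0 := norm_ne_zero_iff.mp (hz ▸ one_ne_zero)
  exact ⟨_, by rw [Complex.cos_arg hz₀, hz, div_one], by rw [Complex.sin_arg, hz, div_one]⟩

lemma eq_or_eq_neg_of_orthogonal_unit {x y u w : ℝ} (hxy : x ^ 2 + y ^ 2 = 1)
    (huw : u ^ 2 + w ^ 2 = 1) (horth : x * u + y * w = 0) :
    (u = -y ∧ w = x) ∨ (u = y ∧ w = -x) := by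
  set μ := x * w - y * u
  have hu : u = -y * μ := by linear_combination x * horth - u * hxy
  have hw : w = x * μ := by linear_combination y * horth - w * hxy
  have hμ : μ * μ = 1 := by
    rw [hu, hw] at huw
    linear_combination huw - μ ^ 2 * hxy
  rcases mul_self_eq_one_iff.mp hμ with h | h
  · left
    rw [h] at hu hw
    constructor <;> linarith
  · right
    rw [h] at hu hw
    constructor <;> linarith

lemma eq_Lrul_or_eq_Mrul_of_subset_hyperboloid {a v : ℝ × ℝ × ℝ} (hv : v ≠ 0)
    (h : lineThrough a v ⊆ hyperboloid) :
    (∃ φ, lineThrough a v = Lrul φ) ∨ ∃ φ, lineThrough a v = Mrul φ := by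
  have hv₃ : v.2.2 ≠ 0 := by
    intro hv₃
    have hq := (lineThrough_subset_hyperboloid_iff.mp h).2.2
    simp only [minkowskiQuad, hv₃] at hq
    exact hv (Prod.ext (by simp only [Prod.fst_zero]; nlinarith)
      (Prod.ext (by simp only [Prod.snd_zero, Prod.fst_zero]; nlinarith) hv₃))
  obtain ⟨x, y, u, w, hline⟩ := exists_lineThrough_eq_of_snd_snd_ne_zero (a := a) hv₃
  rw [hline] at h ⊢
  obtain ⟨hxy, horth, huw⟩ := lineThrough_subset_hyperboloid_iff.mp h
  simp only [minkowskiQuad, minkowskiInner] at hxy horth huw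
  obtain ⟨φ, rfl, rfl⟩ := exists_cos_eq_and_sin_eq (x := x) (y := y) (by linear_combination hxy)
  rcases eq_or_eq_neg_of_orthogonal_unit (u := u) (w := w) (cos_sq_add_sin_sq φ)
      (by linear_combination huw) (by linear_combination horth) with ⟨rfl, rfl⟩ | ⟨rfl, rfl⟩
  · exact Or.inl ⟨φ, (Lrul_eq_lineThrough φ).symm⟩
  · exact Or.inr ⟨φ, (Mrul_eq_lineThrough φ).symm⟩

/-- every line meeting `L(θ₁)`, `L(θ₂)`, `L(θ₃)` for `θ₁, θ₂, θ₃` pairwise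
distinct modulo `2π` is a line `M(φ)` of the second ruling. -/
theorem stmt_8 (θ₁ θ₂ θ₃ : ℝ)
    (h12 : (θ₁ : AddCircle (2 * Real.pi)) ≠ (θ₂ : AddCircle (2 * Real.pi)))
    (h13 : (θ₁ : AddCircle (2 * Real.pi)) ≠ (θ₃ : AddCircle (2 * Real.pi)))
    (h23 : (θ₂ : AddCircle (2 * Real.pi)) ≠ (θ₃ : AddCircle (2 * Real.pi)))
    (L : Set (ℝ × ℝ × ℝ)) (hL : IsLine L)
    (m1 : (L ∩ Lrul θ₁).Nonempty) (m2 : (L ∩ Lrul θ₂).Nonempty)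
    (m3 : (L ∩ Lrul θ₃).Nonempty) :
    ∃ φ : ℝ, L = Mrul φ := by
  obtain ⟨a, v, hv, rfl⟩ := hL
  obtain ⟨_, ⟨r₁, rfl⟩, hp₁⟩ := m1
  obtain ⟨_, ⟨r₂, rfl⟩, hp₂⟩ := m2
  obtain ⟨_, ⟨r₃, rfl⟩, hp₃⟩ := m3
  have hsub : lineThrough a v ⊆ hyperboloid :=
    lineThrough_subset_hyperboloid_of_three_mem (Lrul_subset_hyperboloid θ₁ hp₁)
      (Lrul_subset_hyperboloid θ₂ hp₂) (Lrul_subset_hyperboloid θ₃ hp₃)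
      (by rintro rfl; exact h12 (coe_eq_of_mem_Lrul_of_mem_Lrul hp₁ hp₂))
      (by rintro rfl; exact h13 (coe_eq_of_mem_Lrul_of_mem_Lrul hp₁ hp₃))
      (by rintro rfl; exact h23 (coe_eq_of_mem_Lrul_of_mem_Lrul hp₂ hp₃))
  rcases eq_Lrul_or_eq_Mrul_of_subset_hyperboloid hv hsub with ⟨φ, hφ⟩ | hM
  · have h₁ : a + r₁ • v ∈ Lrul φ := hφ ▸ ⟨r₁, rfl⟩
    have h₂ : a + r₂ • v ∈ Lrul φ := hφ ▸ ⟨r₂, rfl⟩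
    exact absurd ((coe_eq_of_mem_Lrul_of_mem_Lrul hp₁ h₁).trans
      (coe_eq_of_mem_Lrul_of_mem_Lrul h₂ hp₂)) h12
  · exact hM
end
end

section
/- Let σ₁, …, σ_n be closed line segments in ℝ³, each contained in some line L(θᵢ) of the first ruling of the hyperboloid of one sheet S. Let A ⊆ AddCircle (2π) be the image under the quotient map ℝ → AddCircle (2π) of {φ ∈ ℝ : M(φ) meets every σᵢ} (this set is invariant under φ ↦ φ + 2π). Then A has at most n connected components: there exist points φ₁, …, φ_n ∈ A such that every point of A lies in the connected component within A of some φⱼ, or A is empty. -/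
/-!
For `α = arctan t`, the point with parameter `t` of `L(θ)` lies on `M(φ)` exactly when
`φ ≡ θ + 2α (mod 2π)`. As `t` runs over a segment `[p, q]` of `L(θ)`, the admissible `φ` therefore
form the `2πℤ`-translates of the closed interval `[θ + 2 arctan p, θ + 2 arctan q]`.

If `ψ` lies in such a periodic family of intervals for every `i`, take for each `i` the translate
containing `ψ`, and among these the one with the largest left endpoint `cⱼ + 2πk`. Then
`[cⱼ + 2πk, ψ]` lies in every family, so its image in the circle is a connected subset of `A`
joining `ψ` to the class of `cⱼ`. Hence the classes of `c₁, …, cₙ` meet every component of `A`.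
-/

open Set

noncomputable section

open Real

def lrulPoint (θ : ℝ) : ℝ →ᵃ[ℝ] ℝ × ℝ × ℝ :=
  AffineMap.lineMap (cos θ, sin θ, 0) (cos θ - sin θ, sin θ + cos θ, 1)

lemma lrulPoint_apply (θ t : ℝ) :
    lrulPoint θ t = (cos θ - t * sin θ, sin θ + t * cos θ, t) := by
  simp only [lrulPoint, AffineMap.lineMap_apply_module, Prod.smul_mk, smul_eq_mul,
    Prod.mk_add_mk, Prod.mk.injEq]
  refine ⟨by ring, by ring, by ring⟩

lemma lrulPoint_mem_Mrul_iff (θ φ t : ℝ) :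
    lrulPoint θ t ∈ Mrul φ ↔ (φ : Real.Angle) = (θ + 2 * arctan t : ℝ) := by
  -- With `α = arctan t`, the points of `L(θ)` at `t` and of `M(φ)` at `-t` have horizontal parts
  -- `(cos (θ + α), sin (θ + α)) / cos α` and `(cos (φ - α), sin (φ - α)) / cos α`.
  set α := arctan t
  have hα : cos α ≠ 0 := (cos_arctan_pos t).ne'
  have ht : t = sin α / cos α := by rw [← tan_eq_sin_div_cos, tan_arctan]
  have hangle :
      (φ : Real.Angle) = (θ + 2 * α : ℝ) ↔ ((θ + α : ℝ) : Real.Angle) = (φ - α : ℝ) := by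
    rw [eq_comm (a := ((θ + α : ℝ) : Real.Angle)), Real.Angle.angle_eq_iff_two_pi_dvd_sub,
      Real.Angle.angle_eq_iff_two_pi_dvd_sub, show φ - α - (θ + α) = φ - (θ + 2 * α) by ring]
  rw [hangle]
  constructor
  · rintro ⟨s, hs⟩
    simp only [lrulPoint_apply, Prod.mk.injEq] at hs
    obtain ⟨hx, hy, hts⟩ := hs
    obtain rfl : s = -t := by linarith
    rw [ht] at hx hy
    field_simp at hx hy
    apply Real.Angle.cos_sin_inj
    · rw [cos_add, cos_sub]
      linear_combination hx
    · rw [sin_add, sin_sub]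
      linear_combination hy
  · intro h
    have hc := congrArg Real.Angle.cos h
    have hs := congrArg Real.Angle.sin h
    simp only [Real.Angle.cos_coe, Real.Angle.sin_coe, cos_add, cos_sub, sin_add, sin_sub] at hc hs
    refine ⟨-t, ?_⟩
    rw [lrulPoint_apply, Prod.mk.injEq, Prod.mk.injEq]
    refine ⟨?_, ?_, by ring⟩
    · rw [ht]; field_simp; linear_combination hc
    · rw [ht]; field_simp; linear_combination hs

lemma segment_lrulPoint (θ p q : ℝ) :
    segment ℝ (lrulPoint θ p) (lrulPoint θ q) = lrulPoint θ '' Icc (min p q) (max p q) := by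
  rw [← image_segment, segment_eq_uIcc, uIcc]

lemma image_arctan_Icc {a b : ℝ} (hab : a ≤ b) : arctan '' Icc a b = Icc (arctan a) (arctan b) :=
  continuous_arctan.continuousOn.image_Icc_of_monotoneOn hab (arctan_mono.monotoneOn _)

lemma Mrul_inter_segment_nonempty_iff (θ p q φ : ℝ) :
    (Mrul φ ∩ segment ℝ (lrulPoint θ p) (lrulPoint θ q)).Nonempty ↔
      ∃ k : ℤ, φ ∈ Icc (θ + 2 * arctan (min p q) + k * (2 * π))
        (θ + 2 * arctan (max p q) + k * (2 * π)) := by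
  have hφ (k : ℤ) : (∃ t ∈ Icc (min p q) (max p q), φ - (θ + 2 * arctan t) = 2 * π * k) ↔
      φ ∈ Icc (θ + 2 * arctan (min p q) + k * (2 * π)) (θ + 2 * arctan (max p q) + k * (2 * π)) :=
    calc _ ↔ (φ - θ - k * (2 * π)) / 2 ∈ arctan '' Icc (min p q) (max p q) := by
          refine exists_congr fun t => and_congr_right fun _ => ?_
          constructor <;> intro h <;> linarith
      _ ↔ (φ - θ - k * (2 * π)) / 2 ∈ Icc (arctan (min p q)) (arctan (max p q)) := by
          rw [image_arctan_Icc min_le_max]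
      _ ↔ _ := by
          simp only [mem_Icc]
          constructor <;> rintro ⟨h₁, h₂⟩ <;> constructor <;> linarith
  rw [segment_lrulPoint, inter_comm, image_inter_nonempty_iff]
  simp only [Set.Nonempty, mem_inter_iff, mem_preimage, lrulPoint_mem_Mrul_iff,
    Real.Angle.angle_eq_iff_two_pi_dvd_sub]
  constructor
  · rintro ⟨t, ht, k, hk⟩
    exact ⟨k, (hφ k).1 ⟨t, ht, hk⟩⟩
  · rintro ⟨k, hk⟩
    obtain ⟨t, ht, h⟩ := (hφ k).2 hk
    exact ⟨t, ht, k, h⟩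

section PeriodicIntervals

variable {ι : Type*} (p : ℝ) (c d : ι → ℝ)

def periodicIccInter : Set ℝ :=
  {φ | ∀ i, ∃ k : ℤ, φ ∈ Icc (c i + k * p) (d i + k * p)}

variable {p c d}

lemma exists_Icc_subset_periodicIccInter [Finite ι] [Nonempty ι] {ψ : ℝ}
    (hψ : ψ ∈ periodicIccInter p c d) :
    ∃ j, ∃ k : ℤ, c j + k * p ≤ ψ ∧ Icc (c j + k * p) ψ ⊆ periodicIccInter p c d := by
  choose k hk using hψ
  obtain ⟨j, hj⟩ := Finite.exists_max fun i => c i + k i * p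
  exact ⟨j, k j, (hk j).1, fun ρ hρ i => ⟨k i, (hj i).trans hρ.1, hρ.2.trans (hk i).2⟩⟩

lemma AddCircle.exists_mem_connectedComponentIn_periodicIccInter [Finite ι] [Nonempty ι]
    {ξ : AddCircle p} (hξ : ξ ∈ ((↑) : ℝ → AddCircle p) '' periodicIccInter p c d) :
    ∃ j, ξ ∈ connectedComponentIn (((↑) : ℝ → AddCircle p) '' periodicIccInter p c d) (c j) := by
  obtain ⟨ψ, hψ, rfl⟩ := hξ
  obtain ⟨j, k, hle, hsub⟩ := exists_Icc_subset_periodicIccInter hψ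
  have hconn : IsPreconnected (((↑) : ℝ → AddCircle p) '' Icc (c j + k * p) ψ) :=
    isPreconnected_Icc.image _ (AddCircle.continuous_mk' p).continuousOn
  have hcj : ((c j + k * p : ℝ) : AddCircle p) = c j := by
    rw [← zsmul_eq_mul, AddCircle.coe_add, AddCircle.coe_zsmul, AddCircle.coe_period, smul_zero,
      add_zero]
  refine ⟨j, hconn.subset_connectedComponentIn ?_ (image_mono hsub) ⟨ψ, ⟨hle, le_rfl⟩, rfl⟩⟩
  exact ⟨c j + k * p, ⟨le_rfl, hle⟩, hcj⟩

lemma AddCircle.eq_empty_or_exists_connectedComponentIn_periodicIccInter [Finite ι] [Nonempty ι]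
    {A : Set (AddCircle p)} (hA : A = (↑) '' periodicIccInter p c d) :
    A = ∅ ∨ ∃ φ : ι → AddCircle p, (∀ j, φ j ∈ A) ∧
      ∀ ξ ∈ A, ∃ j, ξ ∈ connectedComponentIn A (φ j) := by
  classical
  rcases A.eq_empty_or_nonempty with hempty | ⟨ξ₀, hξ₀⟩
  · exact Or.inl hempty
  refine Or.inr ⟨fun j => if (c j : AddCircle p) ∈ A then c j else ξ₀, fun j => ?_, fun ξ hξ => ?_⟩
  · dsimp only
    split_ifs with h
    exacts [h, hξ₀]
  · subst hA
    obtain ⟨j, hj⟩ := exists_mem_connectedComponentIn_periodicIccInter hξ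
    refine ⟨j, ?_⟩
    dsimp only
    rwa [if_pos (connectedComponentIn_nonempty_iff.mp ⟨ξ, hj⟩)]

end PeriodicIntervals

/-- for `n` segments contained in lines of the first ruling of the
hyperboloid of one sheet, the image `A` in `AddCircle (2π)` of the set of `φ` such that
`M(φ)` meets every segment has at most `n` connected components. -/
theorem stmt_10 (n : ℕ) (hn : 1 ≤ n) (x y : Fin n → ℝ × ℝ × ℝ) (θ : Fin n → ℝ)
    (hσ : ∀ i, segment ℝ (x i) (y i) ⊆ Lrul (θ i))
    (A : Set (AddCircle (2 * Real.pi)))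
    (hA : A = (fun φ : ℝ => (φ : AddCircle (2 * Real.pi))) ''
      {φ : ℝ | ∀ i, (Mrul φ ∩ segment ℝ (x i) (y i)).Nonempty}) :
    A = ∅ ∨ ∃ φ : Fin n → AddCircle (2 * Real.pi), (∀ j, φ j ∈ A) ∧
      ∀ ξ ∈ A, ∃ j, ξ ∈ connectedComponentIn A (φ j) := by
  have hLrul (i : Fin n) {z} (hz : z ∈ segment ℝ (x i) (y i)) : ∃ t, z = lrulPoint (θ i) t := by
    obtain ⟨t, ht⟩ := hσ i hz
    exact ⟨t, by rw [ht, lrulPoint_apply]⟩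
  choose p hp using fun i => hLrul i (left_mem_segment ℝ (x i) (y i))
  choose q hq using fun i => hLrul i (right_mem_segment ℝ (x i) (y i))
  have hA' : A = (↑) '' periodicIccInter (2 * π) (fun i => θ i + 2 * arctan (min (p i) (q i)))
      (fun i => θ i + 2 * arctan (max (p i) (q i))) := by
    simp only [hA, hp, hq, Mrul_inter_segment_nonempty_iff]
    rfl
  have : Nonempty (Fin n) := Fin.pos_iff_nonempty.mp hn
  exact AddCircle.eq_empty_or_exists_connectedComponentIn_periodicIccInter hA'
end
end
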